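/- arXiv:1712.04140 — 3 statements merged into one kernel-verified Lean document; each statement's English description precedes it below -/
import Mathlib

section
/- Let K ≠ ℚ(i), ℚ(√-3) be an imaginary quadratic field of discriminant d_K, N a positive integer, 𝔫 = N·O_K. The map φ_N sending the ±Γ₁(N)-equivalence class of Q ∈ Q_N(d_K) to the ray class modulo 𝔫 of the fractional ideal [ω_Q, 1] is well defined: if Q'((x,y)ᵀ) = Q(σ·(x,y)ᵀ) with σ ∈ ±Γ₁(N), then [ω_Q,1] and [ω_{Q'},1] lie in the same class of I_K(𝔫)/P_{K,1}(𝔫). -/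
open NumberField FractionalIdeal
open scoped nonZeroDivisors

/-- `λ ≡* 1 (mod 𝔫)`: the multiplicative congruence, i.e. `λ = α/β` with
`α, β ∈ O_K` prime to `𝔫` and `α ≡ β (mod 𝔫)`. -/
def MulCongOne {K : Type*} [Field K] [NumberField K]
    (n : Ideal (𝓞 K)) (lam : K) : Prop :=
  ∃ α β : 𝓞 K, Ideal.span {α} ⊔ n = ⊤ ∧ Ideal.span {β} ⊔ n = ⊤ ∧
    (algebraMap (𝓞 K) K β) * lam = algebraMap (𝓞 K) K α ∧ α - β ∈ n

/-- the map `φ_N` is well defined: if `Q' = Q∘σ` with `σ ∈ ±Γ₁(N)`, then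
the fractional ideals `[ω_Q,1]` and `[ω_{Q'},1]` lie in the same ray class modulo
`𝔫 = N·O_K`, i.e. `[ω_{Q'},1] = λ·[ω_Q,1]` for some `λ ∈ K*` with `λ ≡* 1 (mod 𝔫)`. -/
theorem phiN_well_defined
    (K : Type*) [Field K] [NumberField K]
    (d : ℤ) (hd4 : d < -4) (hrank : Module.finrank ℚ K = 2)
    (hdisc : NumberField.discr K = d)
    (sqd : K) (hsqd : sqd ^ 2 = (d : K))
    (f : K →+* ℂ) (hf : 0 < (f sqd).im)
    (N : ℕ) (hN : 0 < N)
    (a b c : ℤ) (ha : 0 < a) (hprim : Int.gcd (Int.gcd a b) c = 1)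
    (hQdisc : b ^ 2 - 4 * a * c = d) (hcop : Int.gcd (N : ℤ) a = 1)
    (a' b' c' : ℤ) (ha' : 0 < a') (hprim' : Int.gcd (Int.gcd a' b') c' = 1)
    (hQdisc' : b' ^ 2 - 4 * a' * c' = d) (hcop' : Int.gcd (N : ℤ) a' = 1)
    (r s u v : ℤ) (hdet : r * v - s * u = 1)
    (ε : ℤ) (hε : ε = 1 ∨ ε = -1)
    (hr : r ≡ ε [ZMOD (N : ℤ)]) (hu : u ≡ 0 [ZMOD (N : ℤ)]) (hv : v ≡ ε [ZMOD (N : ℤ)])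
    (hrel : ∀ x y : ℤ,
      a' * x ^ 2 + b' * x * y + c' * y ^ 2 =
        a * (r * x + s * y) ^ 2 + b * (r * x + s * y) * (u * x + v * y)
          + c * (u * x + v * y) ^ 2)
    (ω ω' : K) (hω : ω = (-(b : K) + sqd) / (2 * a))
    (hω' : ω' = (-(b' : K) + sqd) / (2 * a')) :
    ∃ lam : K, lam ≠ 0 ∧ MulCongOne (Ideal.span {(N : 𝓞 K)}) lam ∧
      spanSingleton (𝓞 K)⁰ ω' + 1 =
        spanSingleton (𝓞 K)⁰ lam * (spanSingleton (𝓞 K)⁰ ω + 1) := by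
  have haK : (a : K) ≠ 0 := Int.cast_ne_zero.2 ha.ne'
  have ha'K : (a' : K) ≠ 0 := Int.cast_ne_zero.2 ha'.ne'
  have hε2 : ε ^ 2 = 1 := by rcases hε with h | h <;> simp [h]
  have hε2K : (ε : K) ^ 2 = 1 := by exact_mod_cast congrArg (fun z : ℤ => (z : K)) hε2
  have hεK : (ε : K) ≠ 0 := by rcases hε with h | h <;> simp [h]
  -- integer identities from hrel
  have hA : a' = a * r ^ 2 + b * r * u + c * u ^ 2 := by linear_combination hrel 1 0
  have hC : c' = a * s ^ 2 + b * s * v + c * v ^ 2 := by linear_combination hrel 0 1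
  have hB : b' = 2 * a * r * s + b * (r * v + s * u) + 2 * c * u * v := by
    linear_combination hrel 1 1 - hrel 1 0 - hrel 0 1
  have hAK : (a' : K) = a * r ^ 2 + b * r * u + c * u ^ 2 := by
    have := congrArg (fun z : ℤ => (z : K)) hA; push_cast at this; exact this
  have hBK : (b' : K) = 2 * a * r * s + b * (r * v + s * u) + 2 * c * u * v := by
    have := congrArg (fun z : ℤ => (z : K)) hB; push_cast at this; exact this
  have hdetK : (r : K) * v - s * u = 1 := by
    have := congrArg (fun z : ℤ => (z : K)) hdet; push_cast at this; exact this
  have hsqd2 : sqd ^ 2 = (b : K) ^ 2 - 4 * a * c := by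
    have hdK : (b : K) ^ 2 - 4 * a * c = d := by
      have := congrArg (fun z : ℤ => (z : K)) hQdisc; push_cast at this; exact this
    rw [hsqd, ← hdK]
  -- the key identity E
  have hE : ω' * ((r : K) - u * ω) = v * ω - s := by
    rw [hω, hω']
    field_simp
    linear_combination (1:K) * ( (-(u:K)) * hsqd2 + (-2*(a:K)*r - u*b + u*sqd) * hBK
      + (2*(v:K)*b + 4*a*s - 2*v*sqd) * hAK
      + ((u:K)*((b:K)^2-4*a*c) - (2*(a:K)*r+u*b)*sqd) * hdetK )
  -- norm of r - uω is a'/a, hence r - uω ≠ 0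
  have hNorm : (a : K) * (((r : K) - u * ω) * ((r : K) - u * ((-(b : K) - sqd) / (2 * a)))) = a' := by
    rw [hω]
    field_simp
    linear_combination (-(u:K)^2) * hsqd2 + (-4*(a:K)) * hAK
  have ht : (r : K) - u * ω ≠ 0 := by
    intro h
    rw [h] at hNorm
    simp at hNorm
    exact ha'K hNorm.symm
  set lam : K := (ε : K) / ((r : K) - u * ω) with hlam
  have hlam0 : lam ≠ 0 := div_ne_zero hεK ht
  -- θ = aω is an algebraic integer
  have hθeq : ((a : K) * ω) ^ 2 + b * ((a : K) * ω) + a * c = 0 := by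
    rw [hω]
    field_simp
    linear_combination hsqd2
  have hθint : IsIntegral ℤ ((a : K) * ω) := by
    refine ⟨Polynomial.X ^ 2 + Polynomial.C b * Polynomial.X + Polynomial.C (a * c), ?_, ?_⟩
    · monicity!
    · simp only [Polynomial.eval₂_add, Polynomial.eval₂_pow, Polynomial.eval₂_mul,
        Polynomial.eval₂_X, Polynomial.eval₂_C]
      simp only [eq_intCast]
      push_cast
      linear_combination hθeq
  set θ : 𝓞 K := ⟨(a : K) * ω, hθint⟩ with hθ
  have hθcoe : algebraMap (𝓞 K) K θ = (a : K) * ω := rfl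
  -- the elements α, β
  set α : 𝓞 K := ((a : ℤ) : 𝓞 K) with hα
  set β : 𝓞 K := ((ε : ℤ) : 𝓞 K) * (((a * r : ℤ) : 𝓞 K) - ((u : ℤ) : 𝓞 K) * θ) with hβ
  have hβcoe : algebraMap (𝓞 K) K β = (ε : K) * ((a : K) * ((r : K) - u * ω)) := by
    rw [hβ]
    simp only [_root_.map_mul, map_sub, map_intCast, hθcoe]
    push_cast
    ring
  have hαcoe : algebraMap (𝓞 K) K α = (a : K) := map_intCast _ a
  refine ⟨lam, hlam0, ⟨α, β, ?_, ?_, ?_, ?_⟩, ?_⟩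
  · -- span α ⊔ n = ⊤
    obtain ⟨x, y, hxy⟩ := Int.isCoprime_iff_gcd_eq_one.2 hcop
    rw [Ideal.eq_top_iff_one]
    have h1 : ((y : 𝓞 K) * α) + ((x : 𝓞 K) * (N : 𝓞 K)) = 1 := by
      have h2 := congrArg (fun z : ℤ => (z : 𝓞 K)) hxy
      push_cast at h2
      rw [hα]
      push_cast
      linear_combination h2
    rw [← h1]
    exact Submodule.add_mem_sup (Ideal.mem_span_singleton'.2 ⟨_, rfl⟩)
      (Ideal.mem_span_singleton'.2 ⟨_, rfl⟩)
  · -- span β ⊔ n = ⊤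
    set βb : 𝓞 K := ((ε : ℤ) : 𝓞 K) * (((a * r + u * b : ℤ) : 𝓞 K) + ((u : ℤ) : 𝓞 K) * θ) with hβb
    have hββ : β * βb = ((a : ℤ) : 𝓞 K) * ((a' : ℤ) : 𝓞 K) := by
      apply RingOfIntegers.coe_injective
      rw [hβ, hβb]
      simp only [_root_.map_mul, _root_.map_add, map_sub, map_intCast, hθcoe]
      push_cast
      linear_combination ((a:K)*((a:K)*(r:K)^2+(b:K)*(r:K)*(u:K)+(c:K)*(u:K)^2)) * hε2K
        + (-(ε:K)^2*(u:K)^2) * hθeq + (-(a:K)) * hAK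
    obtain ⟨x, y, hxy⟩ := (Int.isCoprime_iff_gcd_eq_one.2 hcop).mul_right
      (Int.isCoprime_iff_gcd_eq_one.2 hcop')
    rw [Ideal.eq_top_iff_one]
    have h1 : (((y : 𝓞 K) * βb) * β) + ((x : 𝓞 K) * (N : 𝓞 K)) = 1 := by
      have h2 := congrArg (fun z : ℤ => (z : 𝓞 K)) hxy
      push_cast at h2
      linear_combination h2 + (y : 𝓞 K) * hββ
    rw [← h1]
    exact Submodule.add_mem_sup (Ideal.mem_span_singleton'.2 ⟨_, rfl⟩)
      (Ideal.mem_span_singleton'.2 ⟨_, rfl⟩)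
  · -- β * lam = α
    rw [hβcoe, hαcoe, hlam]
    field_simp
    linear_combination hε2K
  · -- α - β ∈ n
    obtain ⟨k, hk⟩ := hr.dvd
    obtain ⟨m, hm⟩ := hu.dvd
    have hkK : (ε : K) - r = N * k := by
      have := congrArg (fun z : ℤ => (z : K)) hk; push_cast at this; exact this
    have hmK : (0 : K) - u = N * m := by
      have := congrArg (fun z : ℤ => (z : K)) hm; push_cast at this; exact this
    rw [Ideal.mem_span_singleton']
    refine ⟨((a * ε * k : ℤ) : 𝓞 K) + ((-(ε * m) : ℤ) : 𝓞 K) * θ, ?_⟩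
    apply RingOfIntegers.coe_injective
    rw [hβ, hα]
    simp only [_root_.map_mul, _root_.map_add, map_sub, map_intCast, map_natCast, hθcoe]
    push_cast
    linear_combination (-(a:K)*(ε:K)) * hkK + ((ε:K)*((a:K)*ω)) * hmK + (a:K) * hε2K
  · -- the fractional ideal identity
    have I1 : ((ε * v : ℤ) : 𝓞 K) • (lam * ω) + ((-(ε * s) : ℤ) : 𝓞 K) • lam = ω' := by
      rw [Algebra.smul_def, Algebra.smul_def, map_intCast, map_intCast, hlam]
      push_cast
      field_simp
      linear_combination (((v:K)*ω - s)) * hε2K - hE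
    have I2 : ((-(ε * u) : ℤ) : 𝓞 K) • (lam * ω) + ((ε * r : ℤ) : 𝓞 K) • lam = 1 := by
      rw [Algebra.smul_def, Algebra.smul_def, map_intCast, map_intCast, hlam]
      push_cast
      field_simp
      linear_combination (((r:K) - u*ω)) * hε2K
    have I3 : ((ε * r : ℤ) : 𝓞 K) • ω' + ((ε * s : ℤ) : 𝓞 K) • (1 : K) = lam * ω := by
      rw [Algebra.smul_def, Algebra.smul_def, map_intCast, map_intCast, hlam]
      push_cast
      field_simp
      linear_combination (r:K)*hE + ω*hdetK
    have I4 : ((ε * u : ℤ) : 𝓞 K) • ω' + ((ε * v : ℤ) : 𝓞 K) • (1 : K) = lam := by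
      rw [Algebra.smul_def, Algebra.smul_def, map_intCast, map_intCast, hlam]
      push_cast
      field_simp
      linear_combination (u:K)*hE + hdetK
    rw [mul_add, mul_one, spanSingleton_mul_spanSingleton]
    apply coeToSubmodule_injective
    simp only [coe_add, coe_spanSingleton, coe_one]
    rw [Submodule.add_eq_sup, Submodule.add_eq_sup, Submodule.one_eq_span,
      ← Submodule.span_union, ← Submodule.span_union, Set.singleton_union,
      Set.singleton_union]
    apply Submodule.span_eq_span
    · rw [Set.insert_subset_iff, Set.singleton_subset_iff]
      exact ⟨Submodule.mem_span_pair.2 ⟨_, _, I1⟩, Submodule.mem_span_pair.2 ⟨_, _, I2⟩⟩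
    · rw [Set.insert_subset_iff, Set.singleton_subset_iff]
      exact ⟨Submodule.mem_span_pair.2 ⟨_, _, I3⟩, Submodule.mem_span_pair.2 ⟨_, _, I4⟩⟩
end

section
/- Let Q = ax²+bxy+cy² ∈ Q_N(d_K) and let C be any class in P_K(𝔫)/P_{K,1}(𝔫). Then C is represented by a principal ideal of the form (uω_Q+v)O_K with u, v ∈ ℤ satisfying gcd(N, Q(v,-u)) = 1. -/
open NumberField FractionalIdeal
open scoped nonZeroDivisors

/-- A fractional ideal `I` of `K` is prime to the ideal `𝔫` if `I = J·J'⁻¹` with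
`J, J'` integral ideals both coprime to `𝔫`. -/
def IsPrimeToIdeal {K : Type*} [Field K] [NumberField K]
    (I : FractionalIdeal (𝓞 K)⁰ K) (n : Ideal (𝓞 K)) : Prop :=
  ∃ J J' : Ideal (𝓞 K), J ⊔ n = ⊤ ∧ J' ⊔ n = ⊤ ∧
    I = (J : FractionalIdeal (𝓞 K)⁰ K) * (J' : FractionalIdeal (𝓞 K)⁰ K)⁻¹

section Aux
open Matrix Polynomial in
lemma _dummy : True := trivial
open Matrix Polynomial
variable {K : Type*} [Field K] [NumberField K]
variable {d : ℤ} (hd : d < 0) (hrank : Module.finrank ℚ K = 2)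
variable {sqd : K} (hsqd : sqd ^ 2 = (d : K))

include hd hsqd in
lemma li_one_sqd : LinearIndependent ℚ ![1, sqd] := by
  have hd0 : (d : K) ≠ 0 := by
    exact_mod_cast (Int.cast_ne_zero (α := K)).2 hd.ne
  have hsq0 : sqd ≠ 0 := by
    intro h; rw [h] at hsqd; simp at hsqd; exact hd0 hsqd.symm
  rw [linearIndependent_fin2]
  refine ⟨by simpa using hsq0, fun q hq => ?_⟩
  simp only [Matrix.cons_val_one, Matrix.head_cons, Matrix.cons_val_zero] at hq
  rw [Rat.smul_def] at hq
  have h1 : sqd = ((q⁻¹ : ℚ) : K) := by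
    push_cast; exact eq_inv_of_mul_eq_one_left (by linear_combination hq)
  have h2 : ((q⁻¹ ^ 2 : ℚ) : K) = ((d : ℚ) : K) := by
    push_cast at h1 ⊢
    rw [← h1, hsqd]
  have h3 : (q⁻¹ ^ 2 : ℚ) = (d : ℚ) := by exact_mod_cast h2
  have : (0 : ℚ) ≤ q⁻¹ ^ 2 := sq_nonneg _
  rw [h3] at this
  exact absurd this (by exact_mod_cast not_le.2 hd)



include hd hrank hsqd in
lemma trace_norm_formula (x y : ℚ) :
    Algebra.trace ℚ K (x • (1:K) + y • sqd) = 2*x ∧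
    Algebra.norm ℚ (x • (1:K) + y • sqd) = x^2 - d*y^2 := by
  classical
  have li := li_one_sqd hd hsqd
  have hcard : Fintype.card (Fin 2) = Module.finrank ℚ K := by simp [hrank]
  set b2 : Module.Basis (Fin 2) ℚ K := basisOfLinearIndependentOfCardEqFinrank li hcard with hb2def
  have hb2 : ⇑b2 = ![1, sqd] := coe_basisOfLinearIndependentOfCardEqFinrank li hcard
  have hb0 : b2 0 = 1 := by rw [hb2]; rfl
  have hb1 : b2 1 = sqd := by rw [hb2]; rfl
  have hrepr : ∀ (x y : ℚ) (i : Fin 2), b2.repr (x • (1:K) + y • sqd) i = ![x, y] i := by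
    intro x y i
    rw [show x • (1:K) + y • sqd = x • b2 0 + y • b2 1 by rw [hb0, hb1]]
    rw [_root_.map_add, _root_.map_smul, _root_.map_smul, b2.repr_self, b2.repr_self]
    fin_cases i <;> simp [Finsupp.single_apply]
  have hmulsqd : (x • (1:K) + y • sqd) * sqd = (y*d) • (1:K) + x • sqd := by
    simp only [Rat.smul_def]
    push_cast
    linear_combination (y : K) * hsqd
  have hmat : Algebra.leftMulMatrix b2 (x • (1:K) + y • sqd) = !![x, y*d; y, x] := by
    ext i j
    rw [Algebra.leftMulMatrix_eq_repr_mul]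
    fin_cases j
    · rw [show b2 ⟨0, by omega⟩ = 1 from hb0, mul_one, hrepr]
      fin_cases i <;> rfl
    · rw [show b2 ⟨1, by omega⟩ = sqd from hb1, hmulsqd, hrepr]
      fin_cases i <;> rfl
  constructor
  · rw [Algebra.trace_eq_matrix_trace b2, hmat, Matrix.trace_fin_two_of]; ring
  · rw [Algebra.norm_eq_matrix_det b2, hmat, Matrix.det_fin_two_of]; ring

include hd hrank hsqd in
lemma oK_span (hdisc : NumberField.discr K = d)
    (a b c : ℤ) (hQdisc : b ^ 2 - 4 * a * c = d) :
    ∃ θ : 𝓞 K, (algebraMap (𝓞 K) K θ = (-(b : K) + sqd) / 2) ∧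
      ∀ γ : 𝓞 K, ∃ p q : ℤ, γ = p • (1 : 𝓞 K) + q • θ := by
  classical
  have hQK : ((b : K)) ^ 2 - 4 * a * c = (d : K) := by exact_mod_cast congrArg (Int.cast : ℤ → K) hQdisc
  set θK : K := (-(b : K) + sqd) / 2 with hθK
  have hint : IsIntegral ℤ θK := by
    refine ⟨Polynomial.X ^ 2 + Polynomial.C b * Polynomial.X + Polynomial.C (a * c), ?_, ?_⟩
    · monicity!
    · simp only [Polynomial.eval₂_add, Polynomial.eval₂_pow, Polynomial.eval₂_X,
        Polynomial.eval₂_mul, Polynomial.eval₂_C]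
      rw [hθK]
      simp only [eq_intCast]
      push_cast
      linear_combination (1/4 : K) * hsqd - (1/4 : K) * hQK
  set θ : 𝓞 K := ⟨θK, hint⟩ with hθ
  have hθco : algebraMap (𝓞 K) K θ = θK := rfl
  have hθco2 : (θ : K) = θK := rfl
  -- the ℤ-basis of 𝓞 K reindexed by Fin 2
  have hfr : Module.finrank ℤ (𝓞 K) = 2 := by rw [RingOfIntegers.rank, hrank]
  have hcard2 : Fintype.card (Module.Free.ChooseBasisIndex ℤ (𝓞 K)) = 2 := by
    rw [← Module.finrank_eq_card_chooseBasisIndex]; exact hfr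
  set e : Module.Basis (Fin 2) ℤ (𝓞 K) :=
    (RingOfIntegers.basis K).reindex (Fintype.equivFinOfCardEq hcard2) with he
  have hdiscr_e : Algebra.discr ℤ ⇑e = d := by rw [NumberField.discr_eq_discr K e]; exact hdisc
  set w : Fin 2 → 𝓞 K := ![1, θ] with hwdef
  set M : Matrix (Fin 2) (Fin 2) ℤ := Matrix.of (fun i j => e.repr (w i) j) with hM
  have hwM : ∀ i, w i = ∑ j, M i j • e j := fun i => (e.sum_repr (w i)).symm
  have hvec : Matrix.vecMul ⇑e (Mᵀ.map (algebraMap ℤ (𝓞 K))) = w := by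
    funext i
    rw [hwM i]
    simp only [Matrix.vecMul, dotProduct, Matrix.map_apply, Matrix.transpose_apply]
    exact Finset.sum_congr rfl fun j _ => by rw [Algebra.smul_def, mul_comm]
  have hdisc_w : Algebra.discr ℤ w = Mᵀ.det ^ 2 * d := by
    rw [← hdiscr_e, ← hvec, Algebra.discr_of_matrix_vecMul]
  -- computing the discriminant of (1, θ) directly
  have tformula := fun x y => (trace_norm_formula hd hrank hsqd x y).1
  have t1 : Algebra.trace ℤ (𝓞 K) 1 = 2 := by
    have h0 : ((Algebra.trace ℤ (𝓞 K) 1 : ℤ) : ℚ) = ((2 : ℤ) : ℚ) := by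
      rw [Algebra.coe_trace_int]
      have h1 : ((1 : 𝓞 K) : K) = (1 : ℚ) • (1 : K) + (0 : ℚ) • sqd := by simp
      rw [h1, tformula]; norm_num
    exact_mod_cast h0
  have hθrep : (θ : K) = (-((b : ℚ)) / 2) • (1 : K) + ((1 : ℚ) / 2) • sqd := by
    rw [hθco2, hθK]; simp only [Rat.smul_def]; push_cast; ring
  have t2 : Algebra.trace ℤ (𝓞 K) θ = -b := by
    have h0 : ((Algebra.trace ℤ (𝓞 K) θ : ℤ) : ℚ) = ((-b : ℤ) : ℚ) := by
      rw [Algebra.coe_trace_int, hθrep, tformula]; push_cast; ring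
    exact_mod_cast h0
  have t3 : Algebra.trace ℤ (𝓞 K) (θ * θ) = b ^ 2 - 2 * (a * c) := by
    have hsqrep : ((θ * θ : 𝓞 K) : K)
        = ((((b : ℚ)) ^ 2 + d) / 4) • (1 : K) + (-((b : ℚ)) / 2) • sqd := by
      have hv : ((θ * θ : 𝓞 K) : K) = θK * θK := rfl
      rw [hv, hθK]
      simp only [Rat.smul_def]
      push_cast
      linear_combination (1/4 : K) * hsqd
    have h0 : ((Algebra.trace ℤ (𝓞 K) (θ * θ) : ℤ) : ℚ) = ((b ^ 2 - 2 * (a * c) : ℤ) : ℚ) := by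
      rw [Algebra.coe_trace_int, hsqrep, tformula]
      have : ((b : ℚ)) ^ 2 - 4 * a * c = (d : ℚ) := by exact_mod_cast congrArg (Int.cast : ℤ → ℚ) hQdisc
      push_cast
      linear_combination (-1/2 : ℚ) * this
    exact_mod_cast h0
  have hTM : Algebra.traceMatrix ℤ w = !![2, -b; -b, b ^ 2 - 2 * (a * c)] := by
    ext i j
    fin_cases i <;> fin_cases j <;>
      simp [Algebra.traceMatrix_apply, Algebra.traceForm_apply, hwdef, t1, t2, t3]
  have hdw : Algebra.discr ℤ w = d := by
    rw [Algebra.discr_def, hTM, Matrix.det_fin_two_of]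
    linear_combination hQdisc
  have hdet2 : Mᵀ.det ^ 2 = 1 := by
    have : Mᵀ.det ^ 2 * d = 1 * d := by rw [one_mul, ← hdisc_w, hdw]
    exact mul_right_cancel₀ hd.ne this
  have hu : IsUnit M.det := by
    rw [← Matrix.det_transpose]
    exact IsUnit.of_mul_eq_one _ (by rw [← pow_two]; exact hdet2)
  letI := M.invertibleOfIsUnitDet hu
  have hek : ∀ k, e k = ∑ i, (⅟M k i) • w i := by
    intro k
    have h1 : ∑ i, (⅟M k i) • w i = ∑ j, ((⅟M * M) k j) • e j := by
      simp_rw [hwM, Finset.smul_sum, smul_smul, Matrix.mul_apply, Finset.sum_smul]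
      rw [Finset.sum_comm]
    rw [h1, invOf_mul_self]
    simp [Matrix.one_apply]
  have hspan : ∀ γ : 𝓞 K, γ ∈ Submodule.span ℤ ({1, θ} : Set (𝓞 K)) := by
    intro γ
    have hwmem : ∀ i, w i ∈ Submodule.span ℤ ({1, θ} : Set (𝓞 K)) := by
      intro i; fin_cases i
      · exact Submodule.subset_span (Set.mem_insert _ _)
      · exact Submodule.subset_span (Set.mem_insert_of_mem _ rfl)
    have hemem : ∀ k, e k ∈ Submodule.span ℤ ({1, θ} : Set (𝓞 K)) := by
      intro k; rw [hek]
      exact Submodule.sum_smul_mem _ _ fun i _ => hwmem i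
    have := e.sum_repr γ
    rw [← this]
    exact Submodule.sum_smul_mem _ _ fun k _ => hemem k
  refine ⟨θ, hθco, fun γ => ?_⟩
  obtain ⟨p, q, h⟩ := Submodule.mem_span_pair.mp (hspan γ)
  exact ⟨p, q, h.symm⟩

set_option synthInstance.maxHeartbeats 1000000 in
set_option maxHeartbeats 1000000 in
lemma coprime_absNorm (γ : 𝓞 K) (hγ : γ ≠ 0) (N : ℕ)
    (h : Ideal.span {γ} ⊔ Ideal.span {(N : 𝓞 K)} = ⊤) :
    Nat.Coprime N (Ideal.absNorm (Ideal.span {γ})) := by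
  by_contra hcop
  obtain ⟨p, hp, hpN, hpA⟩ := Nat.Prime.not_coprime_iff_dvd.mp hcop
  set I := Ideal.span {γ} with hI
  have hI0 : Ideal.absNorm I ≠ 0 := by
    rw [Ne, Ideal.absNorm_eq_zero_iff]
    simpa [hI, Ideal.span_singleton_eq_bot] using hγ
  have hfin : Finite (𝓞 K ⧸ I) := (Ideal.absNorm_ne_zero_iff I).mp hI0
  letI : Fintype (𝓞 K ⧸ I) := Fintype.ofFinite _
  haveI : Fact p.Prime := ⟨hp⟩
  have hcard : p ∣ Fintype.card (𝓞 K ⧸ I) := by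
    rwa [← Nat.card_eq_fintype_card, ← Submodule.cardQuot_apply, ← Ideal.absNorm_apply]
  obtain ⟨t, ht⟩ := exists_prime_addOrderOf_dvd_card p hcard
  have ht0 : t ≠ 0 := by
    intro h0
    rw [h0, addOrderOf_zero] at ht
    exact hp.ne_one ht.symm
  -- N is invertible modulo I
  have hone : (1 : 𝓞 K) ∈ Ideal.span {γ} ⊔ Ideal.span {(N : 𝓞 K)} := by rw [h]; trivial
  obtain ⟨x, hx, y, hy, hxy⟩ := Submodule.mem_sup.mp hone
  obtain ⟨z, hz⟩ := Ideal.mem_span_singleton'.mp hy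
  have hmodx : (Ideal.Quotient.mk I) x = 0 := by
    rwa [Ideal.Quotient.eq_zero_iff_mem]
  have hmy : (Ideal.Quotient.mk I) y = 1 := by
    have h2 := congrArg (Ideal.Quotient.mk I) hxy
    rwa [_root_.map_add, hmodx, zero_add, _root_.map_one] at h2
  have h1 : (Ideal.Quotient.mk I) z * (N : 𝓞 K ⧸ I) = 1 := by
    rw [← map_natCast (Ideal.Quotient.mk I), ← _root_.map_mul, hz, hmy]
  obtain ⟨k, hk⟩ := hpN
  have hNcast : ((N : ℕ) : 𝓞 K ⧸ I) = (p : 𝓞 K ⧸ I) * (k : 𝓞 K ⧸ I) := by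
    rw [hk]; push_cast; ring
  have hpt : (p : 𝓞 K ⧸ I) * t = 0 := by
    rw [show ((p : ℕ) : 𝓞 K ⧸ I) * t = p • t by rw [nsmul_eq_mul], ← ht,
      addOrderOf_nsmul_eq_zero]
  have : t = 0 := by
    calc t = 1 * t := (one_mul t).symm
    _ = ((Ideal.Quotient.mk I) z * (N : 𝓞 K ⧸ I)) * t := by rw [h1]
    _ = ((Ideal.Quotient.mk I) z * (k : 𝓞 K ⧸ I)) * ((p : 𝓞 K ⧸ I) * t) := by
        rw [hNcast]; ring
    _ = 0 := by rw [hpt, mul_zero]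
  exact ht0 this

end Aux

set_option maxHeartbeats 1000000 in
set_option synthInstance.maxHeartbeats 400000 in
/-- for `Q = ax²+bxy+cy² ∈ Q_N(d_K)`, every class of
`P_K(𝔫)/P_{K,1}(𝔫)` — i.e. the ray class of any nonzero principal fractional ideal
`μ·O_K` prime to `𝔫` — is represented by a principal ideal `(uω_Q+v)·O_K` with
`u, v ∈ ℤ` and `gcd(N, Q(v,-u)) = 1`. -/
theorem principal_rayClass_represented
    (K : Type*) [Field K] [NumberField K]
    (d : ℤ) (hd : d < 0) (hrank : Module.finrank ℚ K = 2)
    (hdisc : NumberField.discr K = d)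
    (sqd : K) (hsqd : sqd ^ 2 = (d : K))
    (f : K →+* ℂ) (hf : 0 < (f sqd).im)
    (N : ℕ) (hN : 0 < N)
    (a b c : ℤ) (ha : 0 < a) (hprim : Int.gcd (Int.gcd a b) c = 1)
    (hQdisc : b ^ 2 - 4 * a * c = d) (hcop : Int.gcd (N : ℤ) a = 1)
    (ω : K) (hω : ω = (-(b : K) + sqd) / (2 * a))
    (μ : K) (hμ : μ ≠ 0)
    (hprime : IsPrimeToIdeal (spanSingleton (𝓞 K)⁰ μ) (Ideal.span {(N : 𝓞 K)})) :
    ∃ u v : ℤ, Int.gcd (N : ℤ) (a * v ^ 2 - b * u * v + c * u ^ 2) = 1 ∧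
      ∃ lam : K, lam ≠ 0 ∧ MulCongOne (Ideal.span {(N : 𝓞 K)}) lam ∧
        spanSingleton (𝓞 K)⁰ ((u : K) * ω + v) =
          spanSingleton (𝓞 K)⁰ lam * spanSingleton (𝓞 K)⁰ μ := by
  classical
  obtain ⟨J, J', hJ, hJ', hspan⟩ := hprime
  set nI : Ideal (𝓞 K) := Ideal.span {(N : 𝓞 K)} with hnI
  have hinj : Function.Injective (algebraMap (𝓞 K) K) := IsFractionRing.injective (𝓞 K) K
  have hJ'0 : J' ≠ ⊥ := by
    intro h0
    rw [h0] at hspan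
    apply hμ
    have hz : spanSingleton (𝓞 K)⁰ μ = 0 := by rw [hspan]; simp
    exact spanSingleton_eq_zero_iff.mp hz
  have hJ'ne : (J' : FractionalIdeal (𝓞 K)⁰ K) ≠ 0 := coeIdeal_ne_zero.mpr hJ'0
  -- choose β ∈ J', β ≠ 0, β ≡ 1 mod nI
  obtain ⟨β, hβ0, hβJ', hβ1⟩ : ∃ β : 𝓞 K, β ≠ 0 ∧ β ∈ J' ∧ β - 1 ∈ nI := by
    have hone : (1 : 𝓞 K) ∈ J' ⊔ nI := by rw [hJ']; trivial
    obtain ⟨x, hx, y, hy, hxy⟩ := Submodule.mem_sup.mp hone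
    by_cases hx0 : x = 0
    · have hy1 : y = 1 := by rw [hx0, zero_add] at hxy; exact hxy
      have htop : nI = ⊤ := by rw [Ideal.eq_top_iff_one]; rw [← hy1]; exact hy
      obtain ⟨β, hβJ', hβ0⟩ := Submodule.exists_mem_ne_zero_of_ne_bot hJ'0
      exact ⟨β, hβ0, hβJ', by rw [htop]; trivial⟩
    · refine ⟨x, hx0, hx, ?_⟩
      rw [show x - (1 : 𝓞 K) = -y by rw [← hxy]; ring]
      exact nI.neg_mem hy
  have hβcop : Ideal.span {β} ⊔ nI = ⊤ := by
    rw [Ideal.eq_top_iff_one]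
    apply Submodule.mem_sup.mpr
    refine ⟨β, Ideal.mem_span_singleton_self β, 1 - β, ?_, by ring⟩
    rw [show (1 : 𝓞 K) - β = -(β - 1) by ring]
    exact nI.neg_mem hβ1
  set βK : K := algebraMap (𝓞 K) K β with hβKdef
  have hβKne : βK ≠ 0 := fun h => hβ0 (hinj (by rw [_root_.map_zero]; exact h))
  -- key fractional ideal computations
  have e1 : spanSingleton (𝓞 K)⁰ (βK * μ)
      = ((Ideal.span {β} : Ideal (𝓞 K)) : FractionalIdeal (𝓞 K)⁰ K)
        * spanSingleton (𝓞 K)⁰ μ := by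
    rw [coeIdeal_span_singleton, spanSingleton_mul_spanSingleton]
  have key : spanSingleton (𝓞 K)⁰ (βK * μ) * (J' : FractionalIdeal (𝓞 K)⁰ K)
      = ((Ideal.span {β} * J : Ideal (𝓞 K)) : FractionalIdeal (𝓞 K)⁰ K) := by
    rw [e1, hspan, coeIdeal_mul]
    rw [mul_assoc, mul_assoc, inv_mul_cancel₀ hJ'ne, mul_one]
  have hmem : βK * μ ∈ (J : FractionalIdeal (𝓞 K)⁰ K) := by
    have h2 : spanSingleton (𝓞 K)⁰ (βK * μ)
        = ((Ideal.span {β} * J : Ideal (𝓞 K)) : FractionalIdeal (𝓞 K)⁰ K)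
          * ((J' : FractionalIdeal (𝓞 K)⁰ K))⁻¹ := by
      rw [← key, mul_assoc, mul_inv_cancel₀ hJ'ne, mul_one]
    have hle : spanSingleton (𝓞 K)⁰ (βK * μ) ≤ (J : FractionalIdeal (𝓞 K)⁰ K) := by
      rw [h2, coeIdeal_mul]
      have hle1 : ((Ideal.span {β} : Ideal (𝓞 K)) : FractionalIdeal (𝓞 K)⁰ K)
          ≤ (J' : FractionalIdeal (𝓞 K)⁰ K) :=
        (coeIdeal_le_coeIdeal K).mpr ((Ideal.span_singleton_le_iff_mem _).mpr hβJ')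
      calc ((Ideal.span {β} : Ideal (𝓞 K)) : FractionalIdeal (𝓞 K)⁰ K) * ↑J * (↑J' : FractionalIdeal (𝓞 K)⁰ K)⁻¹
          ≤ (↑J' : FractionalIdeal (𝓞 K)⁰ K) * ↑J * (↑J' : FractionalIdeal (𝓞 K)⁰ K)⁻¹ := by
            gcongr
        _ = (J : FractionalIdeal (𝓞 K)⁰ K) := by
            rw [mul_comm (↑J' : FractionalIdeal (𝓞 K)⁰ K) (↑J : FractionalIdeal (𝓞 K)⁰ K),
              mul_assoc, mul_inv_cancel₀ hJ'ne, mul_one]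
    exact hle (mem_spanSingleton_self _ _)
  obtain ⟨γ, hγJ, hγeq⟩ := (mem_coeIdeal _).mp hmem
  have hγ0 : γ ≠ 0 := by
    intro h0
    rw [h0, _root_.map_zero] at hγeq
    rcases mul_eq_zero.mp hγeq.symm with h | h
    · exact hβKne h
    · exact hμ h
  have hideal : Ideal.span {γ} * J' = Ideal.span {β} * J := by
    apply coeIdeal_injective (K := K)
    push_cast [coeIdeal_mul]
    rw [coeIdeal_span_singleton, hγeq, key, coeIdeal_mul]
  have hγcop : Ideal.span {γ} ⊔ nI = ⊤ := by
    have h1 : IsCoprime (Ideal.span {β} * J) nI :=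
      (Ideal.isCoprime_iff_sup_eq.mpr hβcop).mul_left (Ideal.isCoprime_iff_sup_eq.mpr hJ)
    have h2 : IsCoprime (Ideal.span {γ} * J') nI := by rw [hideal]; exact h1
    have h3 := Ideal.isCoprime_iff_sup_eq.mp h2
    rw [eq_top_iff, ← h3]
    exact sup_le_sup_right Ideal.mul_le_left nI
  -- decompose γ = p • 1 + q • θ
  obtain ⟨θ, hθco, hdecomp⟩ := oK_span hd hrank hsqd hdisc a b c hQdisc
  obtain ⟨p, q, hγpq⟩ := hdecomp γ
  have hγK : algebraMap (𝓞 K) K γ = (p : K) + (q : K) * ((-(b : K) + sqd) / 2) := by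
    rw [hγpq, _root_.map_add, map_zsmul, map_zsmul, _root_.map_one, hθco]
    simp only [zsmul_eq_mul]
    push_cast
    ring
  set m : ℤ := p ^ 2 - b * q * p + a * c * q ^ 2 with hm
  -- norm computation
  have hnorm : Algebra.norm ℤ γ = m := by
    have hrep : ((γ : K)) = ((p : ℚ) - q * b / 2) • (1 : K) + ((q : ℚ) / 2) • sqd := by
      rw [show ((γ : K)) = algebraMap (𝓞 K) K γ from rfl, hγK]
      simp only [Rat.smul_def]
      push_cast
      ring
    have hdq : ((b : ℚ)) ^ 2 - 4 * a * c = (d : ℚ) :=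
      by exact_mod_cast congrArg (Int.cast : ℤ → ℚ) hQdisc
    have h0 : ((Algebra.norm ℤ γ : ℤ) : ℚ) = ((m : ℤ) : ℚ) := by
      rw [Algebra.coe_norm_int, hrep, (trace_norm_formula hd hrank hsqd _ _).2, hm]
      push_cast
      linear_combination ((q : ℚ) ^ 2 / 4) * hdq
    exact_mod_cast h0
  have hm0 : m ≠ 0 := by
    intro h0
    apply hγ0
    have : ((Algebra.norm ℤ γ : ℤ) : ℚ) = 0 := by rw [hnorm, h0]; simp
    rw [Algebra.coe_norm_int] at this
    have hK0 : ((γ : K)) = 0 := by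
      by_contra hne
      exact (Algebra.norm_ne_zero_iff.mpr hne) (by exact_mod_cast this)
    exact hinj (by rw [_root_.map_zero]; exact hK0)
  have habs : Ideal.absNorm (Ideal.span {γ}) = m.natAbs := by
    rw [Ideal.absNorm_span_singleton, hnorm]
  have hco2 : Nat.Coprime N m.natAbs := by
    rw [← habs]; exact coprime_absNorm γ hγ0 N hγcop
  have hco1 : Nat.Coprime N a.natAbs := by
    have : Int.gcd (N : ℤ) a = Nat.gcd N a.natAbs := by
      rw [Int.gcd]; simp
    rwa [this] at hcop
  refine ⟨q * a, p, ?_, βK, hβKne, ?_, ?_⟩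
  · have hfact : a * p ^ 2 - b * (q * a) * p + c * (q * a) ^ 2 = a * m := by rw [hm]; ring
    rw [hfact]
    have : Int.gcd (N : ℤ) (a * m) = Nat.gcd N (a * m).natAbs := by rw [Int.gcd]; simp
    rw [this, Int.natAbs_mul]
    exact Nat.Coprime.mul_right hco1 hco2
  · exact ⟨β, 1, hβcop, by simp [Ideal.span_singleton_one],
      by rw [_root_.map_one, one_mul], by simpa using hβ1⟩
  · have haK : ((a : ℤ) : K) ≠ 0 := by
      exact_mod_cast (Int.cast_ne_zero (α := K)).mpr ha.ne'
    have h2K : (2 : K) ≠ 0 := two_ne_zero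
    have hval : (((q * a : ℤ) : K)) * ω + ((p : ℤ) : K) = βK * μ := by
      rw [hω, ← hγeq, hγK]
      push_cast
      field_simp
      ring
    rw [spanSingleton_mul_spanSingleton, ← hval]
end

section
/- Let N ≥ 2 and K ≠ ℚ(i), ℚ(√-3) be an imaginary quadratic field of discriminant d_K. For forms Q, Q' ∈ Q_N(d_K), define Q ∼_{N^∞} Q' iff Q ∼_{N^ℓ} Q' for all ℓ ≥ 1 (i.e. Q' = Q^σ for some σ ∈ ±Γ₁(N^ℓ), for each ℓ). Then ∼_{N^∞} coincides with the relation ∼_T given by equivalence under the group ⟨-I₂, T⟩, where T = [[1,1],[0,1]]. -/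
/-- Evaluation of the binary quadratic form with coefficients `(a,b,c)`. -/
def evQ (a b c x y : ℤ) : ℤ := a * x ^ 2 + b * x * y + c * y ^ 2

/-- `Q ∼_M Q'`: the forms are related by a substitution from `±Γ₁(M)`. -/
def RelGammaOne (M : ℕ) (a b c a' b' c' : ℤ) : Prop :=
  ∃ r s u v : ℤ, r * v - s * u = 1 ∧
    (∃ ε : ℤ, (ε = 1 ∨ ε = -1) ∧ r ≡ ε [ZMOD (M : ℤ)] ∧ u ≡ 0 [ZMOD (M : ℤ)] ∧
      v ≡ ε [ZMOD (M : ℤ)]) ∧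
    ∀ x y : ℤ, evQ a' b' c' x y = evQ a b c (r * x + s * y) (u * x + v * y)

/-- `Q ∼_T Q'`: the forms are related by a substitution from `⟨-I₂, T⟩ = {±Tᵗ}`. -/
def RelT (a b c a' b' c' : ℤ) : Prop :=
  ∃ ε t : ℤ, (ε = 1 ∨ ε = -1) ∧
    ∀ x y : ℤ, evQ a' b' c' x y = evQ a b c (ε * (x + t * y)) (ε * y)

/-- for `N ≥ 2` and `d_K < -4` (so `K ≠ ℚ(i), ℚ(√-3)`), two forms
`Q, Q' ∈ Q_N(d_K)` satisfy `Q ∼_{N^ℓ} Q'` for all `ℓ ≥ 1` if and only if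
`Q ∼_T Q'`. -/
theorem relNInfty_iff_relT (N : ℕ) (hN : 2 ≤ N) (d : ℤ) (hd : d < -4)
    (a b c a' b' c' : ℤ) (ha : 0 < a) (ha' : 0 < a')
    (hprim : Int.gcd (Int.gcd a b) c = 1) (hprim' : Int.gcd (Int.gcd a' b') c' = 1)
    (hdisc : b ^ 2 - 4 * a * c = d) (hdisc' : b' ^ 2 - 4 * a' * c' = d)
    (hcop : Int.gcd (N : ℤ) a = 1) (hcop' : Int.gcd (N : ℤ) a' = 1) :
    (∀ ℓ : ℕ, 1 ≤ ℓ → RelGammaOne (N ^ ℓ) a b c a' b' c') ↔ RelT a b c a' b' c' := by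
  constructor
  · intro h
    -- choose ℓ with N ^ ℓ large
    set M : ℕ := (4 * a * a').toNat + 1 with hM
    have hM1 : 1 ≤ M := Nat.le_add_left 1 _
    have hpow : (4 * a * a' : ℤ) < ((N ^ M : ℕ) : ℤ) := by
      have h1 : M < 2 ^ M := Nat.lt_two_pow_self (n := M)
      have h2 : 2 ^ M ≤ N ^ M := Nat.pow_le_pow_left hN M
      have h3 : (4 * a * a').toNat < N ^ M := lt_of_lt_of_le (Nat.lt_of_lt_of_le
        (Nat.lt_succ_self _) (le_of_lt h1)) h2
      have h4 : (4 * a * a' : ℤ) ≤ ((4 * a * a').toNat : ℤ) := Int.self_le_toNat _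
      exact lt_of_le_of_lt h4 (by exact_mod_cast h3)
    obtain ⟨r, s, u, v, hdet, ⟨ε, hε, hr, hu, hv⟩, hQ⟩ := h M hM1
    set B : ℤ := ((N ^ M : ℕ) : ℤ) with hB
    have hB1 : 1 ≤ B := by
      simp only [hB]
      exact_mod_cast Nat.one_le_iff_ne_zero.mpr (pow_ne_zero _ (by omega))
    -- a' = Q(r, u)
    have hA : a' = a * r ^ 2 + b * r * u + c * u ^ 2 := by
      have := hQ 1 0
      simp only [evQ] at this
      linarith [this]
    -- positive definiteness bound: 5 * u ^ 2 ≤ 4 * a * a'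
    have hbound : 5 * u ^ 2 ≤ 4 * a * a' := by
      have key : 4 * a * a' = (2 * a * r + b * u) ^ 2 - d * u ^ 2 := by
        rw [← hdisc]; linear_combination (4 * a) * hA
      nlinarith [sq_nonneg (2 * a * r + b * u), sq_nonneg u]
    -- so u = 0
    have hu0 : u = 0 := by
      have hdvd : B ∣ u := by
        have := hu.dvd
        simpa using (dvd_neg.mp (by simpa using this))
      refine Int.eq_zero_of_abs_lt_dvd hdvd ?_
      nlinarith [sq_abs u, abs_nonneg u]
    subst hu0
    have hrv : r * v = 1 := by linarith [hdet]
    rcases Int.mul_eq_one_iff_eq_one_or_neg_one.mp hrv with ⟨hr1, hv1⟩ | ⟨hr1, hv1⟩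
    · refine ⟨1, s, Or.inl rfl, fun x y => ?_⟩
      have := hQ x y
      rw [hr1, hv1] at this
      simp only [evQ] at this ⊢
      linear_combination this
    · refine ⟨-1, -s, Or.inr rfl, fun x y => ?_⟩
      have := hQ x y
      rw [hr1, hv1] at this
      simp only [evQ] at this ⊢
      linear_combination this
  · rintro ⟨ε, t, hε, hQ⟩ ℓ hℓ
    refine ⟨ε, ε * t, 0, ε, ?_, ⟨ε, hε, Int.ModEq.refl _, Int.ModEq.refl _, Int.ModEq.refl _⟩,
      fun x y => ?_⟩
    · rcases hε with h | h <;> subst h <;> ring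
    · have := hQ x y
      simp only [evQ] at this ⊢
      rcases hε with h | h <;> subst h <;> linear_combination this
end
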